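/- Let Γ be a group with center Z(Γ). Suppose that the quotient group Γ/Z(Γ) (i) has Grossman's Property A, (ii) has trivial center, and (iii) is generated by a set of elements each of whose centralizer in Γ/Z(Γ) is a cyclic subgroup. Then Γ has Grossman's Property A. -/

import Mathlib

/-- A group `G` has Grossman's Property A if every class-preserving automorphism
(i.e. one sending each element to a conjugate of itself) is inner. -/
def HasPropertyA (G : Type*) [Group G] : Prop :=
  ∀ φ : G ≃* G, (∀ g : G, IsConj g (φ g)) → ∃ h : G, ∀ g : G, φ g = h * g * h⁻¹

/-!
Let `φ` be a class-preserving automorphism of `Γ` and `Z` its center. Then `φ` fixes `Z` and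
induces a class-preserving automorphism of `Γ/Z`, which by Property A is conjugation by the image
of some `h`. For `g` over a generator `s`, write `φ g = c g c⁻¹`; then `h⁻¹c` centralizes `g`
modulo `Z`. The preimage in `Γ` of the cyclic centralizer of `s` is a central extension of a
cyclic group, hence abelian, so `h⁻¹c` commutes with `g` on the nose and `φ g = h g h⁻¹`. The
elements where `φ` agrees with conjugation by `h` form a subgroup containing `Z` and lifts of
all generators, hence all of `Γ`.
-/

open Subgroup QuotientGroup

theorem commute_of_isCyclic_centralizer {G : Type*} [Group G] {N : Subgroup G} [N.Normal]
    (hN : N ≤ center G) {g x : G} (hcyc : IsCyclic (centralizer {(g : G ⧸ N)}))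
    (hx : Commute (x : G ⧸ N) g) : Commute x g := by
  set C := centralizer {(g : G ⧸ N)}
  have hker : ((mk' N).subgroupComap C).ker ≤ center (C.comap (mk' N)) := by
    intro k hk
    have hkN : (k : G) ∈ N := (eq_one_iff _).mp (congrArg Subtype.val hk)
    exact mem_center_iff.mpr fun l => Subtype.ext (mem_center_iff.mp (hN hkN) l)
  have hcomm := MonoidHom.isMulCommutative_of_isCyclic_of_ker_le_center _ hker
  have hxC : x ∈ C.comap (mk' N) := mem_centralizer_singleton_iff.mpr hx.eq
  have hgC : g ∈ C.comap (mk' N) := mem_centralizer_singleton_iff.mpr rfl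
  exact congrArg Subtype.val (hcomm.is_comm.comm ⟨x, hxC⟩ ⟨g, hgC⟩)

section ClassPreserving

variable {G : Type*} [Group G] {φ : G ≃* G}

theorem map_eq_self_of_isConj_of_mem_center (hφ : ∀ g, IsConj g (φ g)) {z : G}
    (hz : z ∈ center G) : φ z = z :=
  ((hφ z).eq_of_left_mem_center hz).symm

theorem isConj_congr_of_isConj {N : Subgroup G} [N.Normal] (hN : N.map (φ : G →* G) = N)
    (hφ : ∀ g, IsConj g (φ g)) (q : G ⧸ N) : IsConj q (congr N N φ hN q) := by
  induction q using QuotientGroup.induction_on with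
  | H g => rw [congr_mk]; exact (mk' N).map_isConj (hφ g)

theorem map_eq_conj_of_isCyclic_centralizer {N : Subgroup G} [N.Normal] (hN : N ≤ center G)
    (hφ : ∀ g, IsConj g (φ g)) {g h : G} (hg : (φ g : G ⧸ N) = ↑(h * g * h⁻¹))
    (hcyc : IsCyclic (centralizer {(g : G ⧸ N)})) : φ g = h * g * h⁻¹ := by
  obtain ⟨c, hc⟩ := isConj_iff.mp (hφ g)
  have hx : Commute ((h⁻¹ * c : G) : G ⧸ N) g := by
    rw [← hc] at hg
    simp only [mk_mul, mk_inv] at hg ⊢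
    calc (h : G ⧸ N)⁻¹ * c * g = (h : G ⧸ N)⁻¹ * (c * g * (c : G ⧸ N)⁻¹) * c := by group
      _ = g * ((h : G ⧸ N)⁻¹ * c) := by rw [hg]; group
  have key := (commute_of_isCyclic_centralizer hN hcyc hx).eq
  calc φ g = c * g * c⁻¹ := hc.symm
    _ = h * ((h⁻¹ * c) * g) * (h⁻¹ * c)⁻¹ * h⁻¹ := by group
    _ = h * g * h⁻¹ := by rw [key]; group

end ClassPreserving

theorem propertyA_of_central_quotient (Γ : Type*) [Group Γ]
    (hA : HasPropertyA (Γ ⧸ Subgroup.center Γ))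
    (S : Set (Γ ⧸ Subgroup.center Γ))
    (hgen : Subgroup.closure S = ⊤)
    (hcyc : ∀ s ∈ S, IsCyclic ↥(Subgroup.centralizer ({s} : Set (Γ ⧸ Subgroup.center Γ)))) :
    HasPropertyA Γ := by
  intro φ hφ
  have hφZ : (center Γ).map (φ : Γ →* Γ) = center Γ :=
    characteristic_iff_map_eq.mp inferInstance φ
  obtain ⟨q, hq⟩ := hA _ (isConj_congr_of_isConj hφZ hφ)
  obtain ⟨h, rfl⟩ := mk_surjective q
  set E := MonoidHom.eqLocus (φ : Γ →* Γ) (MulAut.conj h : Γ →* Γ)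
  have hZE : (mk' (center Γ)).ker ≤ E := by
    intro z hz
    rw [ker_mk'] at hz
    change φ z = h * z * h⁻¹
    rw [map_eq_self_of_isConj_of_mem_center hφ hz, mem_center_iff.mp hz h, mul_inv_cancel_right]
  have hSE : S ⊆ E.map (mk' (center Γ)) := by
    intro s hs
    obtain ⟨g, rfl⟩ := mk_surjective s
    refine ⟨g, map_eq_conj_of_isCyclic_centralizer le_rfl hφ ?_ (hcyc _ hs), rfl⟩
    simpa only [congr_mk, mk_mul, mk_inv] using hq g
  have hE : E = ⊤ := by
    have hmap : E.map (mk' (center Γ)) = ⊤ := eq_top_iff.mpr (hgen ▸ (closure_le _).mpr hSE)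
    rw [← comap_map_eq_self hZE, hmap, comap_top]
  exact ⟨h, fun g => (hE ▸ mem_top g : g ∈ E)⟩
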